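/- If β ∈ (β̄, μ_1) ∪ (μ_n, ∞) and α_1, …, α_n are positive real numbers satisfying the system (★), then α_j = ((μ_j − β)·g(β))^{−1/2} for every j = 1, …, n; that is, the positive solution of (★) is unique for such β. -/
import Mathlib


/-- If `β ∈ (β̄, μ 0) ∪ (μ (n-1), ∞)` and `α_1, …, α_n > 0` solve the system
`μ_j α_j² + β ∑_{k ≠ j} α_k² = 1`, then `α_j = ((μ_j - β) g(β))^(-1/2)` for
every `j`; the positive solution is unique for such `β`. -/
theorem stmt_5 (n : ℕ) (hn : 2 ≤ n) (μ : Fin n → ℝ) (hμpos : ∀ k, 0 < μ k)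
    (hμmono : Monotone μ) (g : ℝ → ℝ)
    (hg : ∀ β : ℝ, g β = 1 + β * ∑ k, 1 / (μ k - β))
    (βbar : ℝ) (hβbar : βbar < 0) (hβbarzero : g βbar = 0)
    (β : ℝ)
    (hβ : β ∈ Set.Ioo βbar (μ ⟨0, by omega⟩) ∪ Set.Ioi (μ ⟨n - 1, by omega⟩))
    (α : Fin n → ℝ) (hαpos : ∀ j, 0 < α j)
    (hsys : ∀ j, μ j * α j ^ 2 + β * ∑ k ∈ Finset.univ.erase j, α k ^ 2 = 1) :
    ∀ j, α j = ((μ j - β) * g β) ^ (-(1 / 2) : ℝ) := by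
  set S : ℝ := ∑ k, α k ^ 2 with hSdef
  have hμβ : ∀ j, μ j - β ≠ 0 := by
    intro j
    rcases hβ with ⟨_, h2⟩ | h
    · have hle : μ ⟨0, by omega⟩ ≤ μ j := hμmono (by simp [Fin.le_def])
      have : β < μ j := lt_of_lt_of_le h2 hle
      exact sub_ne_zero.mpr this.ne'
    · have hle : μ j ≤ μ ⟨n - 1, by omega⟩ := by
        apply hμmono
        have := j.2
        simp only [Fin.le_def]
        omega
      have : μ j < β := lt_of_le_of_lt hle h
      exact sub_ne_zero.mpr this.ne
  have key : ∀ j, (μ j - β) * α j ^ 2 = 1 - β * S := by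
    intro j
    have hE : ∑ k ∈ Finset.univ.erase j, α k ^ 2 = S - α j ^ 2 :=
      Finset.sum_erase_eq_sub (Finset.mem_univ j)
    linear_combination hsys j - β * hE
  have hS : S = (1 - β * S) * ∑ k, 1 / (μ k - β) := by
    rw [Finset.mul_sum, hSdef]
    apply Finset.sum_congr rfl
    intro k _
    have hk := hμβ k
    field_simp
    linear_combination key k
  have hgS : (1 - β * S) * g β = 1 := by
    rw [hg]
    linear_combination (-β) * hS
  intro j
  have hx : (μ j - β) * g β = (α j ^ 2)⁻¹ := by
    apply eq_inv_of_mul_eq_one_left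
    linear_combination g β * key j + hgS
  have hj := hαpos j
  have h2 : ((α j ^ 2 : ℝ))⁻¹ = (α j) ^ (-2 : ℝ) := by
    rw [Real.rpow_neg hj.le, ← Real.rpow_natCast (α j) 2]
    norm_num
  rw [hx, h2, ← Real.rpow_mul hj.le]
  norm_num
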